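/- arXiv:1007.3628 — 3 statements merged into one kernel-verified Lean document; each statement's English description precedes it below -/
import Mathlib

section
/- Let μ : ℝ → ℝ be a concave differentiable function with μ(0) < 0. Then the set { c ∈ ℝ : ∃ λ > 0, μ(λ) = λ² − cλ } is nonempty, closed from below, and admits a minimum c*; moreover c* = inf_{λ>0} (λ − μ(λ)/λ) and this infimum is attained. -/
/-- For a concave differentiable `μ` with `μ 0 < 0`, the set
`{c : ∃ λ > 0, μ λ = λ² - cλ}` admits a minimum `c*`, and
`c* = inf_{λ>0} (λ - μ λ / λ)`, this infimum being attained. -/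
theorem minimal_speed_exists (μ : ℝ → ℝ) (hconc : ConcaveOn ℝ Set.univ μ)
    (hdiff : Differentiable ℝ μ) (h0 : μ 0 < 0) :
    ∃ cstar : ℝ,
      IsLeast {c : ℝ | ∃ l > 0, μ l = l ^ 2 - c * l} cstar ∧
      IsLeast ((fun l : ℝ => l - μ l / l) '' {l : ℝ | 0 < l}) cstar := by
  set f : ℝ → ℝ := fun l => l - μ l / l with hf
  have hset : {c : ℝ | ∃ l > 0, μ l = l ^ 2 - c * l} = f '' {l : ℝ | 0 < l} := by
    ext c
    simp only [Set.mem_setOf_eq, Set.mem_image, hf]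
    constructor
    · rintro ⟨l, hl, he⟩
      refine ⟨l, hl, ?_⟩
      field_simp
      nlinarith [he]
    · rintro ⟨l, hl, he⟩
      refine ⟨l, hl, ?_⟩
      have hl' : l ≠ 0 := ne_of_gt hl
      have : c * l = (l - μ l / l) * l := by rw [he]
      rw [sub_mul, div_mul_cancel₀ _ hl'] at this
      nlinarith [this]
  suffices h : ∃ cstar, IsLeast (f '' {l : ℝ | 0 < l}) cstar by
    obtain ⟨cstar, hc⟩ := h
    exact ⟨cstar, hset ▸ hc, hc⟩
  have hcont : Continuous μ := hdiff.continuous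
  set C : ℝ := 1 - μ 1 with hC
  have hfC : f 1 = C := by simp [hf, hC]
  -- near zero : μ l ≤ μ 0 / 2 on a small interval
  obtain ⟨a0, ha0pos, ha0⟩ : ∃ a0 > 0, ∀ l ∈ Set.Icc (0:ℝ) a0, μ l ≤ μ 0 / 2 := by
    have h2 : μ 0 < μ 0 / 2 := by linarith
    have hev : ∀ᶠ l in nhds (0:ℝ), μ l < μ 0 / 2 :=
      (hcont.continuousAt (x := (0:ℝ))).eventually_lt_const h2
    rw [Metric.eventually_nhds_iff] at hev
    obtain ⟨ε, hε, hεh⟩ := hev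
    refine ⟨ε / 2, by linarith, fun l hl => ?_⟩
    have : dist l 0 < ε := by
      rw [Real.dist_eq, sub_zero, abs_of_nonneg hl.1]
      linarith [hl.2]
    exact (hεh this).le
  set a : ℝ := min a0 (min 1 ((-(μ 0 / 2)) / (|C| + 1))) with ha
  have habs : (0:ℝ) < |C| + 1 := by positivity
  have hapos : 0 < a := by
    refine lt_min ha0pos (lt_min one_pos ?_)
    apply div_pos (by linarith) habs
  have ha1 : a ≤ 1 := le_trans (min_le_right _ _) (min_le_left _ _)
  -- bound near zero
  have hnear : ∀ l : ℝ, 0 < l → l ≤ a → C < f l := by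
    intro l hl hla
    have hμl : μ l ≤ μ 0 / 2 :=
      ha0 l ⟨hl.le, le_trans hla (min_le_left _ _)⟩
    have hla' : l ≤ (-(μ 0 / 2)) / (|C| + 1) :=
      le_trans hla (le_trans (min_le_right _ _) (min_le_right _ _))
    have hmul : l * (|C| + 1) ≤ -(μ 0 / 2) := by
      rw [← le_div_iff₀ habs] ; exact hla'
    rw [hf]
    rw [show C < l - μ l / l ↔ μ l / l < l - C by constructor <;> intro <;> linarith]
    rw [div_lt_iff₀ hl]
    nlinarith [le_abs_self C, neg_abs_le C, mul_pos hl hl]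
  -- bound at infinity
  set b : ℝ := max 1 (C + μ 1 + |μ 0| + 1) with hb
  have hb1 : (1:ℝ) ≤ b := le_max_left _ _
  have hfar : ∀ l : ℝ, b ≤ l → C < f l := by
    intro l hbl
    have hl1 : (1:ℝ) ≤ l := le_trans hb1 hbl
    have hl : (0:ℝ) < l := by linarith
    have hlC : C + μ 1 + |μ 0| + 1 ≤ l := le_trans (le_max_right _ _) hbl
    -- chord concavity bound: μ l ≤ l * μ 1 - (l - 1) * μ 0
    have hw1 : (0:ℝ) ≤ 1 - 1 / l := by
      have : 1 / l ≤ 1 := by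
        rw [div_le_one hl]; exact hl1
      linarith
    have hw2 : (0:ℝ) ≤ 1 / l := by positivity
    have hws : (1 - 1 / l) + 1 / l = 1 := by ring
    have hch := hconc.2 (Set.mem_univ (0:ℝ)) (Set.mem_univ l) hw1 hw2 hws
    simp only [smul_eq_mul, mul_zero, zero_add] at hch
    rw [one_div, inv_mul_cancel₀ (ne_of_gt hl)] at hch
    -- hch : (1 - l⁻¹) * μ 0 + l⁻¹ * μ l ≤ μ 1
    have hchord : μ l ≤ l * μ 1 - (l - 1) * μ 0 := by
      have h3 := mul_le_mul_of_nonneg_left hch hl.le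
      have hexp : l * ((1 - l⁻¹) * μ 0 + l⁻¹ * μ l) = (l - 1) * μ 0 + μ l := by
        field_simp
      rw [hexp] at h3
      linarith
    rw [hf]
    rw [show C < l - μ l / l ↔ μ l / l < l - C by constructor <;> intro <;> linarith]
    rw [div_lt_iff₀ hl]
    nlinarith [le_abs_self (μ 0), neg_abs_le (μ 0), abs_nonneg (μ 0),
      mul_le_mul_of_nonneg_left hlC hl.le,
      mul_nonneg (sub_nonneg.mpr hl1) (by linarith [neg_abs_le (μ 0)] : (0:ℝ) ≤ |μ 0| + μ 0)]
  -- minimum on compact [a, b]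
  have hab : a ≤ b := le_trans ha1 hb1
  have hfcont : ContinuousOn f (Set.Icc a b) := by
    apply ContinuousOn.sub continuousOn_id
    apply ContinuousOn.div hcont.continuousOn continuousOn_id
    intro x hx
    exact ne_of_gt (lt_of_lt_of_le hapos hx.1)
  obtain ⟨x0, hx0mem, hx0min⟩ :=
    (isCompact_Icc (a := a) (b := b)).exists_isMinOn
      (Set.nonempty_Icc.mpr hab) hfcont
  have hx0pos : 0 < x0 := lt_of_lt_of_le hapos hx0mem.1
  refine ⟨f x0, ⟨⟨x0, hx0pos, rfl⟩, ?_⟩⟩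
  rintro c ⟨l, hl, rfl⟩
  have h1mem : (1:ℝ) ∈ Set.Icc a b := ⟨ha1, hb1⟩
  have hx0C : f x0 ≤ C := hfC ▸ hx0min h1mem
  rcases le_or_gt l a with h | h
  · exact le_of_lt (lt_of_le_of_lt hx0C (hnear l hl h))
  rcases le_or_gt b l with h' | h'
  · exact le_of_lt (lt_of_le_of_lt hx0C (hfar l h'))
  · exact hx0min ⟨h.le, h'.le⟩
end

section
/- Let (μ_k) be a sequence of concave functions ℝ → ℝ converging locally uniformly to a concave function ν, let (c_k) be a real sequence converging to c, and let (λ_k) be a sequence of reals with μ_k(λ_k) = λ_k² − c_k λ_k for all k. Assume the sequences (μ_k(0)) and (μ_k'(0)) are bounded. Then (λ_k) is bounded, and every accumulation point λ∞ of (λ_k) satisfies ν(λ∞) = λ∞² − c λ∞. -/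
/-!
Comparing `μ k` with its tangent line at `0` gives `λ_k² ≤ μ_k(0) + (μ_k'(0) + c_k) λ_k`, a
quadratic inequality whose coefficients are bounded in `k`; hence `(λ_k)` is bounded. Along the
filter of those `k` with `λ_k` near an accumulation point `λ∞`, locally uniform convergence and
continuity of `ν` give `μ_k(λ_k) → ν(λ∞)`, while `λ_k² - c_k λ_k → λ∞² - c λ∞`.
-/

open Filter Topology

lemma ConcaveOn.le_add_deriv_mul_sub {S : Set ℝ} {f : ℝ → ℝ} {x y : ℝ} (hf : ConcaveOn ℝ S f)
    (hx : x ∈ S) (hy : y ∈ S) (hd : DifferentiableAt ℝ f x) :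
    f y ≤ f x + deriv f x * (y - x) := by
  rcases lt_trichotomy y x with hyx | rfl | hxy
  · have hs := hf.deriv_le_slope hy hx hyx hd
    rw [slope_def_field, le_div_iff₀ (sub_pos.2 hyx)] at hs
    linarith
  · simp
  · have hs := hf.slope_le_deriv hx hy hxy hd
    rw [slope_def_field, div_le_iff₀ (sub_pos.2 hxy)] at hs
    linarith

lemma abs_le_of_sq_le_add_mul {x a b : ℝ} (h : x ^ 2 ≤ a + b * x) :
    |x| ≤ 1 + |a| + |b| := by
  by_contra! hlt
  have hb : b * x ≤ |b| * |x| := (le_abs_self _).trans (abs_mul b x).le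
  nlinarith [sq_abs x, le_abs_self a, abs_nonneg a, abs_nonneg b]

lemma ConcaveOn.abs_le_of_apply_eq_sq_sub_mul {f : ℝ → ℝ} {x c : ℝ}
    (hf : ConcaveOn ℝ Set.univ f) (hd : DifferentiableAt ℝ f 0) (hx : f x = x ^ 2 - c * x) :
    |x| ≤ 1 + |f 0| + |deriv f 0 + c| := by
  apply abs_le_of_sq_le_add_mul
  have htan := hf.le_add_deriv_mul_sub (Set.mem_univ 0) (Set.mem_univ x) hd
  calc x ^ 2 = f x + c * x := by rw [hx]; ring
    _ ≤ f 0 + (deriv f 0 + c) * x := by linarith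

lemma TendstoLocallyUniformly.mono_left {α β ι : Type*} [TopologicalSpace α] [UniformSpace β]
    {F : ι → α → β} {f : α → β} {p p' : Filter ι} (h : TendstoLocallyUniformly F f p)
    (hp : p' ≤ p) : TendstoLocallyUniformly F f p' := fun u hu x =>
  let ⟨t, ht, hF⟩ := h u hu x
  ⟨t, ht, hF.filter_mono hp⟩

/-- Lemma 3 (lemmath1) in abstract form: if concave `μ k` converge locally uniformly
to a concave `ν`, `c k → c`, `μ k (λ k) = λ k ² - c k * λ k`, with `(μ k 0)` and
`(μ k)'(0)` bounded, then `(λ k)` is bounded and every accumulation point `λ∞`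
satisfies `ν λ∞ = λ∞² - c λ∞`. -/
theorem accumulation_points_of_roots (μ : ℕ → ℝ → ℝ) (ν : ℝ → ℝ) (c : ℝ)
    (cseq lam : ℕ → ℝ)
    (hconc : ∀ k, ConcaveOn ℝ Set.univ (μ k)) (hν : ConcaveOn ℝ Set.univ ν)
    (hdiff : ∀ k, DifferentiableAt ℝ (μ k) 0)
    (hcv : TendstoLocallyUniformly μ ν atTop)
    (hc : Tendsto cseq atTop (nhds c))
    (heq : ∀ k, μ k (lam k) = (lam k) ^ 2 - cseq k * lam k)
    (hb0 : ∃ M, ∀ k, |μ k 0| ≤ M)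
    (hb1 : ∃ M, ∀ k, |deriv (μ k) 0| ≤ M) :
    (∃ M, ∀ k, |lam k| ≤ M) ∧
    ∀ linf : ℝ, MapClusterPt linf atTop lam → ν linf = linf ^ 2 - c * linf := by
  obtain ⟨M0, hM0⟩ := hb0
  obtain ⟨M1, hM1⟩ := hb1
  obtain ⟨C, hC⟩ := (Metric.isBounded_range_of_tendsto cseq hc).exists_norm_le
  refine ⟨⟨1 + M0 + (M1 + C), fun k => ?_⟩, fun linf hlinf => ?_⟩
  · have hck : |cseq k| ≤ C := hC _ ⟨k, rfl⟩
    refine ((hconc k).abs_le_of_apply_eq_sq_sub_mul (hdiff k) (heq k)).trans ?_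
    gcongr
    · exact hM0 k
    · exact (abs_add_le _ _).trans (add_le_add (hM1 k) hck)
  set l := atTop ⊓ comap lam (𝓝 linf)
  have hl : l.NeBot := by
    rw [← map_neBot_iff lam, Filter.push_pull, inf_comm]
    exact hlinf
  have hlam : Tendsto lam l (𝓝 linf) := tendsto_comap.mono_left inf_le_right
  have hνc : ContinuousAt ν linf := (hν.continuousOn isOpen_univ).continuousAt univ_mem
  have hlhs : Tendsto (fun k => μ k (lam k)) l (𝓝 (ν linf)) :=
    (hcv.mono_left inf_le_left).tendsto_comp hνc hlam
  have hrhs : Tendsto (fun k => lam k ^ 2 - cseq k * lam k) l (𝓝 (linf ^ 2 - c * linf)) :=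
    (hlam.pow 2).sub ((hc.mono_left inf_le_left).mul hlam)
  exact tendsto_nhds_unique (by simpa only [heq] using hlhs) hrhs
end

section
/- Let (μ_k) be a sequence of concave C¹ functions converging locally uniformly to a concave function ν with ν(0) < 0 and μ_k(0) < 0, with uniformly bounded (μ_k'(0)) and (μ_k(0)). Define c*_k = min{ c : ∃ λ > 0, μ_k(λ) = λ² − cλ } and c* = min{ c : ∃ λ > 0, ν(λ) = λ² − cλ }. Then c*_k → c* as k → ∞. -/
/-!
For `c < c*` the convex function `λ ↦ λ² - cλ - ν λ` is positive on `[0, ∞)`. Choosing `B > 0`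
with value at `B` above the value at `0`, it is bounded below by a positive constant on the compact
`[0, B]`, and uniform convergence transfers both facts to `λ ↦ λ² - cλ - μ_k λ` for large `k`;
convexity then keeps the latter positive beyond `B`, so `c ≤ c*_k` eventually. For `c > c*` a single
root `λ₀` gives `c*_k ≤ λ₀ - μ_k λ₀ / λ₀ → λ₀ - ν λ₀ / λ₀ < c`.
-/

open Filter Set Topology

theorem TendstoUniformlyOn.eventually_forall_lt_of_isCompact {α ι : Type*} [TopologicalSpace α]
    {p : Filter ι} {F : ι → α → ℝ} {f g : α → ℝ} {K : Set α} (hK : IsCompact K)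
    (hF : TendstoUniformlyOn F f p K) (hcont : ContinuousOn (g - f) K)
    (hlt : ∀ x ∈ K, f x < g x) : ∀ᶠ i in p, ∀ x ∈ K, F i x < g x := by
  obtain ⟨m, hm, hgap⟩ := hK.exists_forall_le' hcont fun x hx => sub_pos.2 (hlt x hx)
  filter_upwards [Metric.tendstoUniformlyOn_iff.1 hF m hm] with i hi x hx
  have hclose := (abs_lt.1 (Real.dist_eq _ _ ▸ hi x hx)).1
  have hgapx := hgap x hx
  simp only [Pi.sub_apply] at hgapx
  linarith

theorem ConcaveOn.le_add_mul_sub {f : ℝ → ℝ} (hf : ConcaveOn ℝ univ f) {l : ℝ} (hl : 0 ≤ l) :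
    f l ≤ f 0 + (f 0 - f (-1)) * l := by
  rcases hl.eq_or_lt with rfl | hl
  · simp
  have hslope := hf.slope_anti_adjacent (mem_univ (-1)) (mem_univ l) neg_one_lt_zero hl
  rw [sub_zero, sub_neg_eq_add, zero_add, div_one, div_le_iff₀ hl] at hslope
  linarith

theorem ConcaveOn.lt_sq_sub_mul {f : ℝ → ℝ} (hf : ConcaveOn ℝ univ f) (hf0 : f 0 < 0) {l : ℝ}
    (hl : 0 < l) : f l < l ^ 2 - (f (-1) - f 0) * l := by
  nlinarith [hf.le_add_mul_sub hl.le]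

namespace KPP

def speeds (f : ℝ → ℝ) : Set ℝ := {c | ∃ l > 0, f l = l ^ 2 - c * l}

variable {f : ℝ → ℝ} {c l : ℝ}

theorem sub_div_mem_speeds (f : ℝ → ℝ) (hl : 0 < l) : l - f l / l ∈ speeds f :=
  ⟨l, hl, by field_simp; ring⟩

theorem speeds_nonempty (f : ℝ → ℝ) : (speeds f).Nonempty :=
  ⟨_, sub_div_mem_speeds f one_pos⟩

theorem lt_of_mem_speeds (hf : ∀ l > 0, f l < l ^ 2 - c * l) {c' : ℝ} (hc' : c' ∈ speeds f) :
    c < c' := by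
  obtain ⟨l, hl, hfl⟩ := hc'
  have hlt := hf l hl
  rw [hfl] at hlt
  exact lt_of_mul_lt_mul_right (by linarith) hl.le

theorem bddBelow_speeds (hf : ∀ l > 0, f l < l ^ 2 - c * l) : BddBelow (speeds f) :=
  ⟨c, fun _ hc' => (lt_of_mem_speeds hf hc').le⟩

theorem le_csInf_speeds (hf : ∀ l > 0, f l < l ^ 2 - c * l) : c ≤ sInf (speeds f) :=
  le_csInf (speeds_nonempty f) fun _ hc' => (lt_of_mem_speeds hf hc').le

theorem lt_sq_sub_mul_of_lt_csInf (hbdd : BddBelow (speeds f)) (hc : c < sInf (speeds f))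
    (hl : 0 < l) : f l < l ^ 2 - c * l := by
  by_contra! hle
  have hspeed : l - f l / l ≤ c := by
    rw [sub_le_iff_le_add, ← sub_le_iff_le_add', le_div_iff₀ hl]
    linarith
  exact (csInf_le hbdd (sub_div_mem_speeds f hl)).trans hspeed |>.not_gt hc

theorem exists_sub_div_lt_of_csInf_lt (hc : sInf (speeds f) < c) :
    ∃ l > 0, l - f l / l < c := by
  obtain ⟨c', ⟨l, hl, hfl⟩, hc'⟩ := exists_lt_of_csInf_lt (speeds_nonempty f) hc
  refine ⟨l, hl, ?_⟩
  rw [hfl]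
  field_simp
  linarith

theorem eventually_forall_lt_of_concaveOn {ι : Type*} {p : Filter ι} {μ : ι → ℝ → ℝ}
    {ν q : ℝ → ℝ} {B : ℝ} (hμ : ∀ i, ConcaveOn ℝ (Ici 0) (μ i)) (hq : ConvexOn ℝ (Ici 0) q)
    (hlim : TendstoUniformlyOn μ ν p (Icc 0 B)) (hcont : ContinuousOn (q - ν) (Icc 0 B))
    (hlt : ∀ l ∈ Icc 0 B, ν l < q l) (hB : 0 < B) (hgrow : q 0 - ν 0 < q B - ν B) :
    ∀ᶠ i in p, ∀ l, 0 ≤ l → μ i l < q l := by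
  have hgrowing : ∀ᶠ i in p, q 0 - μ i 0 < q B - μ i B := by
    have hlim0 := (hlim.tendsto_at (left_mem_Icc.2 hB.le)).const_sub (q 0)
    have hlimB := (hlim.tendsto_at (right_mem_Icc.2 hB.le)).const_sub (q B)
    exact hlim0.eventually_lt hlimB hgrow
  filter_upwards [hlim.eventually_forall_lt_of_isCompact isCompact_Icc hcont hlt, hgrowing]
    with i hcompact hgrow_i l hl
  rcases le_or_gt l B with hlB | hBl
  · exact hcompact l ⟨hl, hlB⟩
  have hconv := (hq.sub (hμ i)).le_right_of_left_le (x := 0) (y := l) (z := B) self_mem_Ici hl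
    (by rw [openSegment_eq_Ioo (hB.trans hBl)]; exact ⟨hB, hBl⟩) hgrow_i.le
  have hposB := hcompact B ⟨hB.le, le_rfl⟩
  simp only [Pi.sub_apply] at hconv
  linarith

theorem eventually_forall_lt_sq_sub_mul {ι : Type*} {p : Filter ι} {μ : ι → ℝ → ℝ}
    {ν : ℝ → ℝ} (hμ : ∀ i, ConcaveOn ℝ univ (μ i)) (hν : ConcaveOn ℝ univ ν)
    (hlim : TendstoLocallyUniformly μ ν p) (hν0 : ν 0 < 0) (hc : c < sInf (speeds ν)) :
    ∀ᶠ i in p, ∀ l > 0, μ i l < l ^ 2 - c * l := by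
  have hbdd := bddBelow_speeds fun l hl => hν.lt_sq_sub_mul hν0 hl
  set C := ν 0 - ν (-1)
  set B := |c + C| + 1
  have hB : 0 < B := by positivity
  have hgrow : 0 ^ 2 - c * 0 - ν 0 < B ^ 2 - c * B - ν B := by
    have hνB := hν.le_add_mul_sub hB.le
    have hcCB : c + C < B := by linarith [le_abs_self (c + C)]
    nlinarith
  have hq : ConvexOn ℝ (Ici 0) (fun l : ℝ => l ^ 2 - c * l) :=
    (convexOn_pow 2).sub ((LinearMap.mul ℝ ℝ c).concaveOn (convex_Ici 0))
  have hcont : Continuous ν := continuousOn_univ.1 (hν.continuousOn isOpen_univ)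
  have hlt : ∀ l ∈ Icc 0 B, ν l < l ^ 2 - c * l := by
    rintro l ⟨hl, -⟩
    rcases hl.eq_or_lt with rfl | hl
    · simpa using hν0
    · exact lt_sq_sub_mul_of_lt_csInf hbdd hc hl
  filter_upwards [eventually_forall_lt_of_concaveOn
    (fun i => (hμ i).subset (subset_univ _) (convex_Ici 0)) hq
    (tendstoLocallyUniformly_iff_forall_isCompact.1 hlim _ isCompact_Icc)
    (by fun_prop) hlt hB hgrow] with i hi l hl
  exact hi l hl.le

end KPP

open KPP

theorem minimal_speeds_converge_general (μ : ℕ → ℝ → ℝ) (ν : ℝ → ℝ)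
    (hconc : ∀ k, ConcaveOn ℝ Set.univ (μ k))
    (hν : ConcaveOn ℝ Set.univ ν)
    (hcv : TendstoLocallyUniformly μ ν atTop)
    (hν0 : ν 0 < 0) :
    Tendsto (fun k => sInf {c : ℝ | ∃ l > 0, μ k l = l ^ 2 - c * l}) atTop
      (nhds (sInf {c : ℝ | ∃ l > 0, ν l = l ^ 2 - c * l})) := by
  change Tendsto (fun k => sInf (speeds (μ k))) atTop (𝓝 (sInf (speeds ν)))
  have hdom : ∀ c < sInf (speeds ν), ∀ᶠ k in atTop, ∀ l > 0, μ k l < l ^ 2 - c * l :=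
    fun c hc => eventually_forall_lt_sq_sub_mul hconc hν hcv hν0 hc
  refine tendsto_order.2 ⟨fun c hc => ?_, fun c hc => ?_⟩
  · obtain ⟨c', hcc', hc'⟩ := exists_between hc
    exact (hdom c' hc').mono fun k hk => hcc'.trans_le (le_csInf_speeds hk)
  · obtain ⟨l, hl, hlc⟩ := exists_sub_div_lt_of_csInf_lt hc
    have hpoint : Tendsto (fun k => l - μ k l / l) atTop (𝓝 (l - ν l / l)) :=
      (((tendstoLocallyUniformly_iff_forall_isCompact.1 hcv _ isCompact_singleton).tendsto_at
        rfl).div_const l).const_sub l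
    filter_upwards [hpoint.eventually (gt_mem_nhds hlc), hdom _ (sub_one_lt _)] with k hk hdomk
    exact (csInf_le (bddBelow_speeds hdomk) (sub_div_mem_speeds _ hl)).trans_lt hk

/-- Convergence of minimal speeds (final assertion of Theorem 2, abstract form):
if concave `C¹` functions `μ k` converge locally uniformly to a concave `ν` with
`ν 0 < 0` and `μ k 0 < 0`, with `(μ k 0)` and `(μ k)'(0)` bounded, then the minimal
speeds `c*_k = min {c : ∃ λ > 0, μ k λ = λ² - cλ}` converge to
`c* = min {c : ∃ λ > 0, ν λ = λ² - cλ}`. -/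
theorem minimal_speeds_converge (μ : ℕ → ℝ → ℝ) (ν : ℝ → ℝ)
    (hconc : ∀ k, ConcaveOn ℝ Set.univ (μ k))
    (hC1 : ∀ k, ContDiff ℝ 1 (μ k))
    (hν : ConcaveOn ℝ Set.univ ν)
    (hcv : TendstoLocallyUniformly μ ν atTop)
    (hν0 : ν 0 < 0) (hμ0 : ∀ k, μ k 0 < 0)
    (hb0 : ∃ M, ∀ k, |μ k 0| ≤ M)
    (hb1 : ∃ M, ∀ k, |deriv (μ k) 0| ≤ M) :
    Tendsto (fun k => sInf {c : ℝ | ∃ l > 0, μ k l = l ^ 2 - c * l}) atTop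
      (nhds (sInf {c : ℝ | ∃ l > 0, ν l = l ^ 2 - c * l})) :=
  minimal_speeds_converge_general μ ν hconc hν hcv hν0
end
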